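/- arXiv:1212.1056 — 2 statements merged into one kernel-verified Lean document; each statement's English description precedes it below -/
import Mathlib

section
/- A binary linear code C ⊆ GF(2)^n has a 2-basis if and only if there exists a finite graph G (possibly with loops and parallel edges) with n edges such that C equals the cut space of G. -/
open scoped Classical
noncomputable section

/-- Points of `ℝ^d`. -/
abbrev Pt (d : ℕ) : Type := EuclideanSpace ℝ (Fin d)

/-- A triangular configuration embedded into `ℝ^d`: a finite geometric simplicial
complex each of whose faces has at most 3 vertices. -/
structure TriangularConfiguration (d : ℕ) where
  faces : Finset (Finset (Pt d))
  not_empty_mem : ∅ ∉ faces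
  indep : ∀ s ∈ faces, AffineIndependent ℝ ((↑) : s → Pt d)
  down_closed : ∀ s ∈ faces, ∀ u ⊆ s, u ≠ ∅ → u ∈ faces
  inter_subset_convexHull : ∀ s ∈ faces, ∀ u ∈ faces,
    convexHull ℝ (s : Set (Pt d)) ∩ convexHull ℝ (u : Set (Pt d)) ⊆
      convexHull ℝ ((s ∩ u : Finset (Pt d)) : Set (Pt d))
  card_le : ∀ s ∈ faces, s.card ≤ 3

namespace TriangularConfiguration

variable {d : ℕ}

/-- The triangles (2-dimensional faces) of a triangular configuration. -/
def triangles (Δ : TriangularConfiguration d) : Finset (Finset (Pt d)) :=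
  Δ.faces.filter fun s => s.card = 3

/-- The edges (1-dimensional faces) of a triangular configuration. -/
def edges (Δ : TriangularConfiguration d) : Finset (Finset (Pt d)) :=
  Δ.faces.filter fun s => s.card = 2

/-- The type of triangles of `Δ`. -/
abbrev Tri (Δ : TriangularConfiguration d) : Type := {t : Finset (Pt d) // t ∈ Δ.triangles}

/-- The cycle space of `Δ` over `GF(2)`: the kernel of the edge–triangle incidence
matrix of `Δ`. -/
def cycleSpace (Δ : TriangularConfiguration d) : Submodule (ZMod 2) (Δ.Tri → ZMod 2) where
  carrier := {x | ∀ e ∈ Δ.edges, (∑ t : Δ.Tri, if e ⊆ t.1 then x t else 0) = 0}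
  zero_mem' := by intro e _; simp
  add_mem' := by
    intro a b ha hb e he
    have h : (∑ t : Δ.Tri, if e ⊆ t.1 then (a + b) t else 0)
        = (∑ t : Δ.Tri, if e ⊆ t.1 then a t else 0)
          + (∑ t : Δ.Tri, if e ⊆ t.1 then b t else 0) := by
      rw [← Finset.sum_add_distrib]
      refine Finset.sum_congr rfl fun t _ => ?_
      by_cases h : e ⊆ t.1 <;> simp [h]
    rw [h, ha e he, hb e he, add_zero]
  smul_mem' := by
    intro c x hx e he
    have h : (∑ t : Δ.Tri, if e ⊆ t.1 then (c • x) t else 0)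
        = c * ∑ t : Δ.Tri, if e ⊆ t.1 then x t else 0 := by
      rw [Finset.mul_sum]
      refine Finset.sum_congr rfl fun t _ => ?_
      by_cases h : e ⊆ t.1 <;> simp [h]
    rw [h, hx e he, mul_zero]

/-- The underlying point set `|Δ|` of a triangular configuration. -/
def space (Δ : TriangularConfiguration d) : Set (Pt d) :=
  ⋃ s ∈ Δ.faces, convexHull ℝ (s : Set (Pt d))

/-- A cell of `Δ` is a connected component of `ℝ^d \ |Δ|`. -/
def IsCell (Δ : TriangularConfiguration d) (X : Set (Pt d)) : Prop :=
  ∃ x ∈ Δ.spaceᶜ, X = connectedComponentIn Δ.spaceᶜ x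

/-- The set of cells of `Δ`. -/
def cells (Δ : TriangularConfiguration d) : Set (Set (Pt d)) := {X | Δ.IsCell X}

/-- The number of cells of `Δ`. -/
def numCells (Δ : TriangularConfiguration d) : ℕ := Δ.cells.ncard

/-- A triangle `t` is incident with a cell `X` if `t ⊆ cl(X)`. -/
def IncidentCell (Δ : TriangularConfiguration d) (t : Finset (Pt d)) (X : Set (Pt d)) : Prop :=
  Δ.IsCell X ∧ convexHull ℝ (t : Set (Pt d)) ⊆ closure X

/-- A strong boundary: a triangular configuration with at least two cells, every
proper subconfiguration of which has fewer cells. -/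
def IsStrongBoundary (C : TriangularConfiguration d) : Prop :=
  2 ≤ C.numCells ∧
    ∀ C' : TriangularConfiguration d, C'.faces ⊂ C.faces → C'.numCells < C.numCells

/-- A strong boundary of `Δ`: a strong boundary that is a subconfiguration of `Δ`. -/
def IsStrongBoundaryOf (Δ C : TriangularConfiguration d) : Prop :=
  C.IsStrongBoundary ∧ C.faces ⊆ Δ.faces

/-- The inner cell `int C` of a strong boundary `C` (the union of its bounded cells;
for a strong boundary there is exactly one). -/
def intCell (C : TriangularConfiguration d) : Set (Pt d) :=
  ⋃₀ {X | C.IsCell X ∧ Bornology.IsBounded X}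

/-- The outer cell `ext C` of a strong boundary `C` (the union of its unbounded cells;
for a strong boundary there is exactly one). -/
def extCell (C : TriangularConfiguration d) : Set (Pt d) :=
  ⋃₀ {X | C.IsCell X ∧ ¬Bornology.IsBounded X}

/-- An elementary strong boundary of `Δ`. -/
def IsElementary (Δ C : TriangularConfiguration d) : Prop :=
  IsStrongBoundaryOf Δ C ∧
    ∀ C' : TriangularConfiguration d, IsStrongBoundaryOf Δ C' →
      ¬((C.intCell ∩ C'.intCell).Nonempty ∧ (C.intCell ∩ C'.extCell).Nonempty)

/-- `Δ` is connected if every two triangles of `Δ` belong to a common strong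
boundary of `Δ`. -/
def Connected (Δ : TriangularConfiguration d) : Prop :=
  ∀ t₁ ∈ Δ.triangles, ∀ t₂ ∈ Δ.triangles,
    ∃ C : TriangularConfiguration d, IsStrongBoundaryOf Δ C ∧ t₁ ∈ C.faces ∧ t₂ ∈ C.faces

/-- The characteristic vector in `GF(2)^{T(Δ)}` of a subconfiguration `C` of `Δ`. -/
def chi (Δ C : TriangularConfiguration d) : Δ.Tri → ZMod 2 :=
  fun t => if t.1 ∈ C.faces then 1 else 0

/-- The set of characteristic vectors of elementary strong boundaries of `Δ`. -/
def esbVectors (Δ : TriangularConfiguration d) : Set (Δ.Tri → ZMod 2) :=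
  {x | ∃ C : TriangularConfiguration d, IsElementary Δ C ∧ x = Δ.chi C}

/-- The configuration `Δ` with the (2-dimensional) triangle face `t` removed,
keeping all other faces of `Δ`. -/
def eraseTriangle (Δ : TriangularConfiguration d) (t : Finset (Pt d))
    (ht : t ∈ Δ.triangles) : TriangularConfiguration d where
  faces := Δ.faces.erase t
  not_empty_mem h := Δ.not_empty_mem (Finset.mem_of_mem_erase h)
  indep s hs := Δ.indep s (Finset.mem_of_mem_erase hs)
  down_closed := by
    intro s hs u hu hune
    have hsf : s ∈ Δ.faces := Finset.mem_of_mem_erase hs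
    refine Finset.mem_erase.2 ⟨?_, Δ.down_closed s hsf u hu hune⟩
    rintro rfl
    have htc : u.card = 3 := (Finset.mem_filter.1 ht).2
    have hsc : s.card ≤ 3 := Δ.card_le s hsf
    have : u = s := Finset.eq_of_subset_of_card_le hu (by omega)
    exact (Finset.mem_erase.1 hs).1 this.symm
  inter_subset_convexHull s hs u hu :=
    Δ.inter_subset_convexHull s (Finset.mem_of_mem_erase hs) u (Finset.mem_of_mem_erase hu)
  card_le s hs := Δ.card_le s (Finset.mem_of_mem_erase hs)

/-- The subconfiguration `K(E)` of `Δ` generated by a set `E` of triangles of `Δ`: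
the triangles of `E` together with all their faces. -/
def generatedBy (Δ : TriangularConfiguration d) (E : Finset (Finset (Pt d))) :
    TriangularConfiguration d where
  faces := Δ.faces.filter fun s => ∃ u ∈ E, s ⊆ u
  not_empty_mem h := Δ.not_empty_mem (Finset.mem_filter.1 h).1
  indep s hs := Δ.indep s (Finset.mem_filter.1 hs).1
  down_closed := by
    intro s hs u hu hune
    have h := Finset.mem_filter.1 hs
    obtain ⟨w, hw, hsw⟩ := h.2
    exact Finset.mem_filter.2 ⟨Δ.down_closed s h.1 u hu hune, w, hw, hu.trans hsw⟩
  inter_subset_convexHull s hs u hu :=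
    Δ.inter_subset_convexHull s (Finset.mem_filter.1 hs).1 u (Finset.mem_filter.1 hu).1
  card_le s hs := Δ.card_le s (Finset.mem_filter.1 hs).1

end TriangularConfiguration

/-- A binary linear code (given as a subspace of `GF(2)^ι`) has a 2-basis if it has a
basis in which every coordinate is non-zero in at most two basis vectors. -/
def HasTwoBasis {ι : Type*} (C : Submodule (ZMod 2) (ι → ZMod 2)) : Prop :=
  ∃ B : Finset (ι → ZMod 2),
    LinearIndependent (ZMod 2) (fun b : {x // x ∈ B} => (b : ι → ZMod 2)) ∧
    Submodule.span (ZMod 2) (B : Set (ι → ZMod 2)) = C ∧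
    ∀ i : ι, (B.filter fun b => b i ≠ 0).card ≤ 2

/-- A binary linear code `C ⊆ GF(2)^n` has a geometric representation embeddable into
`ℝ^d` if there is a triangular configuration `Δ` embedded in `ℝ^d` such that
`C = ker Δ / S` for some set `S` of triangles of `Δ` (the coordinates outside `S`
being enumerated by an injection `g`) and `dim C = dim ker Δ`. -/
def HasGeomRep (d n : ℕ) (C : Submodule (ZMod 2) (Fin n → ZMod 2)) : Prop :=
  ∃ (Δ : TriangularConfiguration d) (g : Fin n → Δ.Tri),
    Function.Injective g ∧
    C = Δ.cycleSpace.map (LinearMap.funLeft (ZMod 2) (ZMod 2) g) ∧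
    Module.finrank (ZMod 2) C = Module.finrank (ZMod 2) Δ.cycleSpace

/-- The cut space of a finite graph (possibly with loops and parallel edges) whose `n`
edges are given by their endpoints `ends : Fin n → Sym2 V`: the span of the incidence
vectors `χ(E(v))`, where `χ(E(v)) i = 1` iff edge `i` is a non-loop edge incident with `v`. -/
def cutSpace {V : Type} [Fintype V] {n : ℕ} (ends : Fin n → Sym2 V) :
    Submodule (ZMod 2) (Fin n → ZMod 2) :=
  Submodule.span (ZMod 2)
    {x | ∃ v : V, x = fun i => if v ∈ ends i ∧ ¬(ends i).IsDiag then (1 : ZMod 2) else 0}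


/-!
Each edge has at most two ends, so every coordinate is non-zero in at most two incidence vectors
of a graph, and any basis extracted from them inherits this. Conversely, for a 2-basis `B` take the vertex set `B`
plus one extra vertex `none`: coordinate `i` becomes the edge joining the (at most two) basis
vectors that are non-zero at `i`, padded with `none` or made a loop. Then `χ(E(b)) = b`, and
`χ(E(none))` adds nothing to the span because the incidence vectors of all vertices sum to `0`.
-/

lemma ZMod.ite_ne_zero_one_zero (x : ZMod 2) : (if x ≠ 0 then 1 else 0) = x := by
  fin_cases x <;> rfl

section Incidence

variable {ι V : Type*}

def incidence (ends : ι → Sym2 V) (v : V) : ι → ZMod 2 :=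
  fun i => if v ∈ ends i ∧ ¬(ends i).IsDiag then 1 else 0

lemma cutSpace_eq_span_range_incidence {V : Type} [Fintype V] {n : ℕ} (ends : Fin n → Sym2 V) :
    cutSpace ends = Submodule.span (ZMod 2) (Set.range (incidence ends)) := by
  simp only [cutSpace, Set.range, eq_comm]
  rfl

lemma sum_incidence_eq_zero [Fintype V] (ends : ι → Sym2 V) : ∑ v, incidence ends v = 0 := by
  ext i
  by_cases hi : (ends i).IsDiag
  · simp [incidence, hi]
  · have hcard := Sym2.card_toFinset_of_not_isDiag (ends i) hi
    simp only [incidence, hi, not_false_eq_true, and_true, Finset.sum_apply, Finset.sum_boole,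
      Pi.zero_apply]
    rw [show Finset.univ.filter (· ∈ ends i) = (ends i).toFinset by ext; simp, hcard]
    rfl

lemma span_range_incidence_eq_span_image_compl [Fintype V] (ends : ι → Sym2 V) (v₀ : V) :
    Submodule.span (ZMod 2) (Set.range (incidence ends)) =
      Submodule.span (ZMod 2) (incidence ends '' {v₀}ᶜ) := by
  refine le_antisymm (Submodule.span_le.2 ?_) (Submodule.span_mono (Set.image_subset_range _ _))
  rintro _ ⟨v, rfl⟩
  by_cases hv : v = v₀
  · subst hv
    have hsum := sum_incidence_eq_zero ends
    rw [← Finset.add_sum_erase _ _ (Finset.mem_univ v)] at hsum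
    rw [SetLike.mem_coe, eq_neg_of_add_eq_zero_left hsum]
    refine neg_mem (Submodule.sum_mem _ fun w hw => Submodule.subset_span ⟨w, ?_, rfl⟩)
    simpa using Finset.ne_of_mem_erase hw
  · exact Submodule.subset_span ⟨v, hv, rfl⟩

lemma card_filter_incidence_ne_zero_le_two [Fintype V] (ends : ι → Sym2 V) (i : ι) :
    ((Finset.univ.image (incidence ends)).filter (· i ≠ 0)).card ≤ 2 := by
  calc _ ≤ ((ends i).toFinset.image (incidence ends)).card := by
        refine Finset.card_le_card fun x hx => ?_
        obtain ⟨hx_image, hv⟩ := Finset.mem_filter.1 hx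
        obtain ⟨v, -, rfl⟩ := Finset.mem_image.1 hx_image
        simp only [incidence, ne_eq, ite_eq_right_iff, one_ne_zero, imp_false, not_not] at hv
        exact Finset.mem_image_of_mem _ (Sym2.mem_toFinset.2 hv.1)
    _ ≤ (ends i).toFinset.card := Finset.card_image_le
    _ ≤ 2 := by rw [Sym2.card_toFinset]; split_ifs <;> norm_num

end Incidence

lemma exists_sym2_option_nonloop_iff {α : Type*} (s : Finset α) (hs : s.card ≤ 2) :
    ∃ e : Sym2 (Option α), ∀ a, (some a ∈ e ∧ ¬e.IsDiag) ↔ a ∈ s := by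
  interval_cases h : s.card
  · exact ⟨s(none, none), fun a => by simp [Finset.card_eq_zero.1 h]⟩
  · obtain ⟨a, rfl⟩ := Finset.card_eq_one.1 h
    exact ⟨s(some a, none), fun b => by simp⟩
  · obtain ⟨a, c, hac, rfl⟩ := Finset.card_eq_two.1 h
    exact ⟨s(some a, some c), fun b => by simp [hac]⟩

lemma exists_incidence_some_eq {ι : Type*} (B : Finset (ι → ZMod 2))
    (hB : ∀ i, (B.filter fun b => b i ≠ 0).card ≤ 2) :
    ∃ ends : ι → Sym2 (Option B), ∀ b : B, incidence ends (some b) = b := by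
  have hcard (i : ι) : (Finset.univ.filter fun b : B => b.1 i ≠ 0).card ≤ 2 := by
    rw [← Finset.card_map (Function.Embedding.subtype _)]
    convert hB i using 2
    ext x
    simp [and_comm]
  choose ends hends using fun i => exists_sym2_option_nonloop_iff _ (hcard i)
  refine ⟨ends, fun b => funext fun i => ?_⟩
  simp only [incidence, hends, Finset.mem_filter, Finset.mem_univ, true_and]
  exact ZMod.ite_ne_zero_one_zero _

lemma hasTwoBasis_span_of_card_filter_le_two {ι : Type*} (S : Finset (ι → ZMod 2))
    (hS : ∀ i, (S.filter fun x => x i ≠ 0).card ≤ 2) :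
    HasTwoBasis (Submodule.span (ZMod 2) (S : Set (ι → ZMod 2))) := by
  obtain ⟨B, hBS, hspan, hli⟩ := exists_linearIndependent (ZMod 2) (S : Set (ι → ZMod 2))
  lift B to Finset (ι → ZMod 2) using S.finite_toSet.subset hBS
  refine ⟨B, hli, hspan, fun i => (Finset.card_le_card ?_).trans (hS i)⟩
  exact Finset.filter_subset_filter _ (Finset.coe_subset.1 hBS)

/-- A binary linear code `C ⊆ GF(2)^n` has a 2-basis iff there is a finite
graph `G` (possibly with loops and parallel edges) with `n` edges whose cut space is `C`. -/
theorem hasTwoBasis_iff_cutSpace (n : ℕ)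
    (C : Submodule (ZMod 2) (Fin n → ZMod 2)) :
    HasTwoBasis C ↔
      ∃ (V : Type) (_ : Fintype V) (ends : Fin n → Sym2 V), C = cutSpace ends := by
  constructor
  · rintro ⟨B, -, rfl, hB⟩
    obtain ⟨ends, hends⟩ := exists_incidence_some_eq B hB
    refine ⟨Option B, inferInstance, ends, ?_⟩
    rw [cutSpace_eq_span_range_incidence, span_range_incidence_eq_span_image_compl ends none]
    congr 1
    ext x
    simp [Option.exists, hends]
  · rintro ⟨V, _, ends, rfl⟩
    have := hasTwoBasis_span_of_card_filter_le_two _ (card_filter_incidence_ne_zero_le_two ends)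
    simpa [cutSpace_eq_span_range_incidence] using this
end
end

section
/- Let Δ be a triangular configuration embedded into ℝ³. Then every triangle t of Δ is incident with at least one cell of Δ and at most two cells of Δ. -/
open scoped Classical
noncomputable section

/-! Let `ℓ = r` be a plane containing the triangle `t`. A compact subset `S` of the relative
interior of `t` meets no other face of `Δ`, so the slab of points within a small distance of `S`
on the side `ℓ > r` is a convex subset of the complement of `|Δ|`, hence lies in a single cell.
The slabs over the segments from a fixed interior point `c` to the other interior points all
contain the points just above `c`, so they lie in one common cell, whose closure therefore
contains `t`. Conversely, a cell incident with `t` is open and has `c` in its closure, so it meets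
one of the two half-balls at `c` on either side of the plane, and each half-ball lies in a single
cell. -/

section OpenSimplex

variable (𝕜 : Type*) {E : Type*} [Field 𝕜] [LinearOrder 𝕜] [IsStrictOrderedRing 𝕜]
  [AddCommGroup E] [Module 𝕜 E]

def openSimplex (t : Finset E) : Set E :=
  {x | ∃ w : E → 𝕜, (∀ y ∈ t, 0 < w y) ∧ ∑ y ∈ t, w y = 1 ∧ ∑ y ∈ t, w y • y = x}

variable {𝕜} {t u : Finset E}

lemma openSimplex_subset_convexHull : openSimplex 𝕜 t ⊆ convexHull 𝕜 (t : Set E) :=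
  fun _ ⟨w, hw₀, hw₁, hx⟩ ↦ Finset.mem_convexHull'.2 ⟨w, fun y hy ↦ (hw₀ y hy).le, hw₁, hx⟩

lemma openSimplex_nonempty (ht : t.Nonempty) : (openSimplex 𝕜 t).Nonempty := by
  have hcard : (t.card : 𝕜) ≠ 0 := Nat.cast_ne_zero.2 ht.card_pos.ne'
  refine ⟨_, fun _ ↦ (t.card : 𝕜)⁻¹, fun _ _ ↦ by positivity, ?_, rfl⟩
  simp [hcard]

lemma openSegment_subset_openSimplex {x y : E} (hx : x ∈ openSimplex 𝕜 t)
    (hy : y ∈ convexHull 𝕜 (t : Set E)) : openSegment 𝕜 x y ⊆ openSimplex 𝕜 t := by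
  obtain ⟨w, hw₀, hw₁, rfl⟩ := hx
  obtain ⟨v, hv₀, hv₁, rfl⟩ := Finset.mem_convexHull'.1 hy
  rintro _ ⟨a, b, ha, hb, hab, rfl⟩
  refine ⟨fun z ↦ a * w z + b * v z, fun z hz ↦ ?_, ?_, ?_⟩
  · exact add_pos_of_pos_of_nonneg (mul_pos ha (hw₀ z hz)) (mul_nonneg hb.le (hv₀ z hz))
  · simp only [Finset.sum_add_distrib, ← Finset.mul_sum, hw₁, hv₁, mul_one, hab]
  · simp only [add_smul, mul_smul, Finset.sum_add_distrib, ← Finset.smul_sum]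

lemma convex_openSimplex : Convex 𝕜 (openSimplex 𝕜 t) :=
  convex_iff_openSegment_subset.2 fun _ hx _ hy ↦
    openSegment_subset_openSimplex hx (openSimplex_subset_convexHull hy)

lemma convexHull_subset_closure_openSimplex [TopologicalSpace 𝕜] [OrderTopology 𝕜]
    [TopologicalSpace E] [ContinuousAdd E] [ContinuousSMul 𝕜 E] (ht : t.Nonempty) :
    convexHull 𝕜 (t : Set E) ⊆ closure (openSimplex 𝕜 t) := by
  obtain ⟨c, hc⟩ := openSimplex_nonempty (𝕜 := 𝕜) ht
  intro y hy
  exact closure_mono (openSegment_subset_openSimplex hc hy)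
    (segment_subset_closure_openSegment (right_mem_segment 𝕜 c y))

lemma AffineIndependent.disjoint_openSimplex_convexHull
    (hind : AffineIndependent 𝕜 ((↑) : t → E)) (hu : u ⊂ t) :
    Disjoint (openSimplex 𝕜 t) (convexHull 𝕜 (u : Set E)) := by
  refine Set.disjoint_left.2 fun x ⟨w, hw₀, hw₁, hwx⟩ hxu ↦ ?_
  obtain ⟨v, -, hv₁, hvx⟩ := Finset.mem_convexHull'.1 hxu
  obtain ⟨z, hzt, hzu⟩ := Finset.exists_of_ssubset hu
  have hv₁' : ∑ y ∈ t, (if y ∈ u then v y else 0) = 1 := by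
    rwa [Finset.sum_ite_mem, Finset.inter_eq_right.2 hu.subset]
  have hvx' : ∑ y ∈ t, (if y ∈ u then v y else 0) • y = x := by
    simp_rw [ite_smul, zero_smul]
    rwa [Finset.sum_ite_mem, Finset.inter_eq_right.2 hu.subset]
  have := hind.eq_of_sum_eq_sum_subtype (hw₁.trans hv₁'.symm) (hwx.trans hvx'.symm) z hzt
  simp only [hzu, if_false] at this
  exact (hw₀ z hzt).ne' this

end OpenSimplex

lemma Finset.exists_hyperplane_containing {E : Type*} [NormedAddCommGroup E]
    [InnerProductSpace ℝ E] [FiniteDimensional ℝ E] {t : Finset E} (ht : t.Nonempty)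
    (hcard : t.card ≤ Module.finrank ℝ E) :
    ∃ (ℓ : E →L[ℝ] ℝ) (n : E) (r : ℝ), 0 < ℓ n ∧ ∀ y ∈ t, ℓ y = r := by
  obtain ⟨a, ha⟩ := ht
  have hpos := Finset.card_pos.2 ⟨a, ha⟩
  have hspan : vectorSpan ℝ (t : Set E) ≠ ⊤ := by
    intro htop
    have hle := finrank_vectorSpan_image_finset_le ℝ id t (n := t.card - 1) (by omega)
    rw [Finset.image_id, htop, finrank_top] at hle
    omega
  obtain ⟨n, hn, hn0⟩ := (Submodule.ne_bot_iff _).1 (mt Submodule.orthogonal_eq_bot_iff.1 hspan)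
  refine ⟨innerSL ℝ n, n, inner ℝ n a, by simpa using pow_pos (norm_pos_iff.2 hn0) 2,
    fun y hy ↦ ?_⟩
  have h := Submodule.inner_left_of_mem_orthogonal (vsub_mem_vectorSpan ℝ hy ha) hn
  rwa [vsub_eq_sub, inner_sub_right, sub_eq_zero] at h

lemma convexHull_subset_setOf_eq {E : Type*} [AddCommGroup E] [Module ℝ E] {ℓ : E →ₗ[ℝ] ℝ}
    {s : Set E} {r : ℝ} (h : ∀ y ∈ s, ℓ y = r) : convexHull ℝ s ⊆ {y | ℓ y = r} :=
  convexHull_min h (convex_hyperplane ℓ.isLinear r)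

section Slab

open Metric Filter Topology

variable {E : Type*} [NormedAddCommGroup E] [NormedSpace ℝ E]

lemma tendsto_add_smul_nhdsGT_zero (x n : E) :
    Tendsto (fun s : ℝ ↦ x + s • n) (𝓝[>] 0) (𝓝 x) :=
  ((by fun_prop : Continuous fun s : ℝ ↦ x + s • n).tendsto' 0 x (by simp)).mono_left
    nhdsWithin_le_nhds

lemma eventually_add_smul_mem_of_isOpen {U : Set E} (hU : IsOpen U) {x : E} (hx : x ∈ U)
    (n : E) : ∀ᶠ s in 𝓝[>] (0 : ℝ), x + s • n ∈ U :=
  tendsto_add_smul_nhdsGT_zero x n (hU.mem_nhds hx)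

lemma mem_closure_of_eventually_add_smul_mem {V : Set E} {x n : E}
    (h : ∀ᶠ s in 𝓝[>] (0 : ℝ), x + s • n ∈ V) : x ∈ closure V :=
  mem_closure_of_tendsto (tendsto_add_smul_nhdsGT_zero x n) h

lemma eventually_add_smul_mem_thickening_inter {ℓ : E →L[ℝ] ℝ} {n : E} (hℓn : 0 < ℓ n)
    {S : Set E} {ρ r : ℝ} (hρ : 0 < ρ) {x : E} (hxS : x ∈ S) (hx : ℓ x = r) :
    ∀ᶠ s in 𝓝[>] (0 : ℝ), x + s • n ∈ thickening ρ S ∩ {y | r < ℓ y} := by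
  filter_upwards [eventually_add_smul_mem_of_isOpen isOpen_thickening
    (self_subset_thickening hρ S hxS) n, self_mem_nhdsWithin] with s hs hs₀
  refine ⟨hs, ?_⟩
  simp only [Set.mem_ofPred_eq, map_add, map_smul, smul_eq_mul, hx]
  nlinarith [mul_pos (Set.mem_Ioi.1 hs₀) hℓn]

lemma IsOpen.exists_apply_ne {U : Set E} (hU : IsOpen U) (hne : U.Nonempty)
    {ℓ : E →L[ℝ] ℝ} {n : E} (hℓn : ℓ n ≠ 0) (r : ℝ) : ∃ y ∈ U, ℓ y ≠ r := by
  obtain ⟨x, hx⟩ := hne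
  by_cases hxr : ℓ x = r
  · obtain ⟨s, hsU, hs⟩ := ((eventually_add_smul_mem_of_isOpen hU hx n).and
      self_mem_nhdsWithin).exists
    refine ⟨_, hsU, ?_⟩
    simpa [hxr] using mul_ne_zero (Set.mem_Ioi.1 hs).ne' hℓn
  · exact ⟨x, hx, hxr⟩

end Slab

namespace TriangularConfiguration

open Metric Filter Topology

variable {d : ℕ} {Δ : TriangularConfiguration d} {t : Finset (Pt d)} {X Y V : Set (Pt d)}

lemma isClosed_space (Δ : TriangularConfiguration d) : IsClosed Δ.space :=
  isClosed_biUnion_finset fun s _ ↦ (s.finite_toSet.isCompact_convexHull (𝕜 := ℝ)).isClosed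

lemma IsCell.isOpen (hX : Δ.IsCell X) : IsOpen X := by
  obtain ⟨x, -, rfl⟩ := hX
  exact Δ.isClosed_space.isOpen_compl.connectedComponentIn

lemma IsCell.subset_of_isPreconnected (hX : Δ.IsCell X) (hV : IsPreconnected V)
    (hVs : V ⊆ Δ.spaceᶜ) (hVX : (V ∩ X).Nonempty) : V ⊆ X := by
  obtain ⟨x, -, rfl⟩ := hX
  obtain ⟨y, hyV, hyX⟩ := hVX
  rw [connectedComponentIn_eq hyX]
  exact hV.subset_connectedComponentIn hyV hVs

lemma IsCell.eq_of_isPreconnected (hX : Δ.IsCell X) (hY : Δ.IsCell Y) (hV : IsPreconnected V)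
    (hVs : V ⊆ Δ.spaceᶜ) (hVX : (V ∩ X).Nonempty) (hVY : (V ∩ Y).Nonempty) : X = Y := by
  obtain ⟨y, hyV, hyY⟩ := hVY
  have hyX := hX.subset_of_isPreconnected hV hVs hVX hyV
  obtain ⟨x, -, rfl⟩ := hX
  obtain ⟨x', -, rfl⟩ := hY
  rw [connectedComponentIn_eq hyX, connectedComponentIn_eq hyY]

lemma space_subset_union_space_eraseTriangle (ht : t ∈ Δ.triangles) :
    Δ.space ⊆ convexHull ℝ (t : Set (Pt d)) ∪ (Δ.eraseTriangle t ht).space := by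
  intro x hx
  obtain ⟨s, hs, hxs⟩ := Set.mem_iUnion₂.1 hx
  by_cases hst : s = t
  · exact Or.inl (hst ▸ hxs)
  · exact Or.inr (Set.mem_iUnion₂.2 ⟨s, Finset.mem_erase.2 ⟨hst, hs⟩, hxs⟩)

lemma disjoint_openSimplex_space_eraseTriangle (ht : t ∈ Δ.triangles) :
    Disjoint (openSimplex ℝ t) (Δ.eraseTriangle t ht).space := by
  obtain ⟨htf, htc⟩ := Finset.mem_filter.1 ht
  refine Set.disjoint_left.2 fun x hxt hx ↦ ?_
  obtain ⟨s, hs, hxs⟩ := Set.mem_iUnion₂.1 hx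
  obtain ⟨hst, hsf⟩ := Finset.mem_erase.1 hs
  have hssub : s ∩ t ⊂ t := by
    refine Finset.ssubset_iff_subset_ne.2 ⟨Finset.inter_subset_right, fun h ↦ hst ?_⟩
    exact (Finset.eq_of_subset_of_card_le (Finset.inter_eq_right.1 h)
      (htc ▸ Δ.card_le s hsf)).symm
  exact Set.disjoint_left.1 ((Δ.indep t htf).disjoint_openSimplex_convexHull hssub) hxt
    (Δ.inter_subset_convexHull s hsf t htf ⟨hxs, openSimplex_subset_convexHull hxt⟩)

lemma nonempty_of_mem_triangles (ht : t ∈ Δ.triangles) : t.Nonempty :=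
  Finset.card_pos.1 (by rw [(Finset.mem_filter.1 ht).2]; norm_num)

variable {ℓ : Pt d →L[ℝ] ℝ} {n : Pt d} {r : ℝ}

lemma exists_thickening_inter_subset_compl_space (ht : t ∈ Δ.triangles)
    (hℓt : ∀ y ∈ t, ℓ y = r) {S : Set (Pt d)} (hS : IsCompact S) (hSt : S ⊆ openSimplex ℝ t) :
    ∃ ρ > 0, thickening ρ S ∩ {y | ℓ y ≠ r} ⊆ Δ.spaceᶜ := by
  obtain ⟨ρ, hρ, hρS⟩ := hS.exists_thickening_subset_open
    (Δ.eraseTriangle t ht).isClosed_space.isOpen_compl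
    fun x hx ↦ Set.disjoint_left.1 (disjoint_openSimplex_space_eraseTriangle ht) (hSt hx)
  refine ⟨ρ, hρ, fun y ⟨hyS, hyr⟩ hy ↦ ?_⟩
  rcases space_subset_union_space_eraseTriangle ht hy with hyt | hyK
  · exact hyr (convexHull_subset_setOf_eq (ℓ := ℓ.toLinearMap) hℓt hyt)
  · exact hρS hyS hyK

lemma exists_slab (ht : t ∈ Δ.triangles) (hℓn : 0 < ℓ n) (hℓt : ∀ y ∈ t, ℓ y = r)
    {c p : Pt d} (hc : c ∈ openSimplex ℝ t) (hp : p ∈ openSimplex ℝ t) :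
    ∃ V : Set (Pt d), IsPreconnected V ∧ V ⊆ Δ.spaceᶜ ∧ p ∈ closure V ∧
      ∀ᶠ s in 𝓝[>] (0 : ℝ), c + s • n ∈ V := by
  have hplane : ∀ x ∈ openSimplex ℝ t, ℓ x = r := fun x hx ↦
    convexHull_subset_setOf_eq (ℓ := ℓ.toLinearMap) hℓt (openSimplex_subset_convexHull hx)
  set S := convexHull ℝ ({c, p} : Set (Pt d))
  have hcS : c ∈ S := subset_convexHull ℝ _ (by simp)
  have hpS : p ∈ S := subset_convexHull ℝ _ (by simp)
  obtain ⟨ρ, hρ, hρS⟩ := exists_thickening_inter_subset_compl_space ht hℓt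
    ((Set.toFinite _).isCompact_convexHull (𝕜 := ℝ))
    (convexHull_min (Set.pair_subset hc hp) convex_openSimplex)
  refine ⟨thickening ρ S ∩ {y | r < ℓ y}, ?_, fun y hy ↦ hρS ⟨hy.1, hy.2.ne'⟩,
    mem_closure_of_eventually_add_smul_mem
      (eventually_add_smul_mem_thickening_inter hℓn hρ hpS (hplane p hp)),
    eventually_add_smul_mem_thickening_inter hℓn hρ hcS (hplane c hc)⟩
  exact ((convex_convexHull ℝ _).thickening ρ |>.inter
    (convex_halfSpace_gt ℓ.toLinearMap.isLinear r)).isPreconnected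

lemma exists_incidentCell (ht : t ∈ Δ.triangles) (hℓn : 0 < ℓ n) (hℓt : ∀ y ∈ t, ℓ y = r) :
    ∃ X, Δ.IncidentCell t X := by
  have htne := nonempty_of_mem_triangles ht
  obtain ⟨c, hc⟩ := openSimplex_nonempty (𝕜 := ℝ) htne
  obtain ⟨V₀, hV₀, hV₀s, -, hcV₀⟩ := exists_slab ht hℓn hℓt hc hc
  obtain ⟨s₀, hs₀⟩ := hcV₀.exists
  have hX : Δ.IsCell (connectedComponentIn Δ.spaceᶜ (c + s₀ • n)) :=
    ⟨_, hV₀s hs₀, rfl⟩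
  have hV₀X := hX.subset_of_isPreconnected hV₀ hV₀s
    ⟨_, hs₀, mem_connectedComponentIn (hV₀s hs₀)⟩
  refine ⟨_, hX, (convexHull_subset_closure_openSimplex htne).trans
    (closure_minimal (fun p hp ↦ ?_) isClosed_closure)⟩
  obtain ⟨V, hV, hVs, hpV, hcV⟩ := exists_slab ht hℓn hℓt hc hp
  obtain ⟨s, hsV, hsV₀⟩ := (hcV.and hcV₀).exists
  exact closure_mono (hX.subset_of_isPreconnected hV hVs ⟨_, hsV, hV₀X hsV₀⟩) hpV

lemma exists_incidentCell_eq_of_meets_iff (ht : t ∈ Δ.triangles) (hℓn : 0 < ℓ n)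
    (hℓt : ∀ y ∈ t, ℓ y = r) :
    ∃ V : Set (Pt d), ∀ X Y, Δ.IncidentCell t X → Δ.IncidentCell t Y →
      ((V ∩ X).Nonempty ↔ (V ∩ Y).Nonempty) → X = Y := by
  obtain ⟨c, hc⟩ := openSimplex_nonempty (𝕜 := ℝ) (nonempty_of_mem_triangles ht)
  obtain ⟨ρ, hρ, hball⟩ := exists_thickening_inter_subset_compl_space ht hℓt
    isCompact_singleton (Set.singleton_subset_iff.2 hc)
  rw [thickening_singleton] at hball
  set above := ball c ρ ∩ {y | r < ℓ y}
  set below := ball c ρ ∩ {y | ℓ y < r}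
  have habove : IsPreconnected above :=
    ((convex_ball c ρ).inter (convex_halfSpace_gt ℓ.toLinearMap.isLinear r)).isPreconnected
  have hbelow : IsPreconnected below :=
    ((convex_ball c ρ).inter (convex_halfSpace_lt ℓ.toLinearMap.isLinear r)).isPreconnected
  have hmeets : ∀ X, Δ.IncidentCell t X → (above ∩ X).Nonempty ∨ (below ∩ X).Nonempty := by
    intro X hX
    obtain ⟨y, ⟨hyc, hyX⟩, hyr⟩ := (isOpen_ball.inter hX.1.isOpen).exists_apply_ne
      (mem_closure_iff.1 (hX.2 (openSimplex_subset_convexHull hc)) _ isOpen_ball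
        (mem_ball_self hρ)) hℓn.ne' r
    rcases hyr.lt_or_gt with hy | hy
    exacts [Or.inr ⟨y, ⟨hyc, hy⟩, hyX⟩, Or.inl ⟨y, ⟨hyc, hy⟩, hyX⟩]
  refine ⟨above, fun X Y hX hY hXY ↦ ?_⟩
  by_cases hX_above : (above ∩ X).Nonempty
  · exact hX.1.eq_of_isPreconnected hY.1 habove (fun y hy ↦ hball ⟨hy.1, hy.2.ne'⟩)
      hX_above (hXY.1 hX_above)
  · exact hX.1.eq_of_isPreconnected hY.1 hbelow (fun y hy ↦ hball ⟨hy.1, hy.2.ne⟩)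
      ((hmeets X hX).resolve_left hX_above)
      ((hmeets Y hY).resolve_left (mt hXY.2 hX_above))

end TriangularConfiguration

/-- Every triangle of a triangular configuration `Δ` embedded into `ℝ³`
is incident with at least one and at most two cells of `Δ`. -/
theorem triangle_incident_one_or_two_cells (Δ : TriangularConfiguration 3)
    (t : Finset (Pt 3)) (ht : t ∈ Δ.triangles) :
    (∃ X : Set (Pt 3), Δ.IncidentCell t X) ∧
    (∀ X₁ X₂ X₃ : Set (Pt 3), Δ.IncidentCell t X₁ → Δ.IncidentCell t X₂ →
      Δ.IncidentCell t X₃ → X₁ = X₂ ∨ X₁ = X₃ ∨ X₂ = X₃) := by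
  obtain ⟨ℓ, n, r, hℓn, hℓt⟩ := Finset.exists_hyperplane_containing
    (TriangularConfiguration.nonempty_of_mem_triangles ht)
    (by rw [(Finset.mem_filter.1 ht).2, finrank_euclideanSpace_fin])
  obtain ⟨V, hV⟩ := Δ.exists_incidentCell_eq_of_meets_iff ht hℓn hℓt
  refine ⟨Δ.exists_incidentCell ht hℓn hℓt, fun X₁ X₂ X₃ h₁ h₂ h₃ ↦ ?_⟩
  have hpigeon : ((V ∩ X₁).Nonempty ↔ (V ∩ X₂).Nonempty) ∨
      ((V ∩ X₁).Nonempty ↔ (V ∩ X₃).Nonempty) ∨ ((V ∩ X₂).Nonempty ↔ (V ∩ X₃).Nonempty) := by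
    tauto
  rcases hpigeon with h | h | h
  exacts [Or.inl (hV _ _ h₁ h₂ h), Or.inr (Or.inl (hV _ _ h₁ h₃ h)),
    Or.inr (Or.inr (hV _ _ h₂ h₃ h))]
end
end
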